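/- arXiv:1506.04297 — 2 statements merged into one kernel-verified Lean document; each statement's English description precedes it below -/
import Mathlib

section
/- Let A be a complex abelian surface, n a positive integer, and λ = (λ₁,…,λ_ℓ) a partition of n with e(λ) = gcd(λ₁,…,λ_ℓ). Let s : A^ℓ → A be the homomorphism s(x₁,…,x_ℓ) = Σᵢ λᵢ xᵢ. Then the kernel K^λ = Ker(s) has exactly e(λ)⁴ connected components. -/
/-!
Write `λ = e • μ` with `gcd μ = 1`, so that `s = e • t` for `t x = ∑ i, μᵢ • xᵢ`, and
`Ker s = t⁻¹ (A[e])`. By Bézout, `t` has a continuous right inverse `σ a = (cᵢ • a)ᵢ`, hence every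
fibre of `t` is a translate of the connected set `Ker t`, the image of the connected space `A^ℓ`
under `z ↦ z - σ (t z)`. Since `A[e]` is finite and Hausdorff, hence discrete, the connected
components of `Ker s` are exactly the fibres of `t` over `A[e]`, of which there are `e ^ 4`.
-/

open Finset

lemma Finset.natCast_gcd {ι : Type*} (s : Finset ι) (f : ι → ℕ) :
    ((s.gcd f : ℕ) : ℤ) = s.gcd fun i ↦ (f i : ℤ) := by
  classical
  induction s using Finset.induction with
  | empty => simp
  | insert a s _ ih =>
    rw [gcd_insert, gcd_insert, ← ih, ← Int.coe_gcd, Int.gcd_natCast_natCast]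
    rfl

lemma Finset.exists_sum_natCast_mul_eq_one {ι : Type*} {s : Finset ι} {w : ι → ℕ}
    (h : s.gcd w = 1) : ∃ c : ι → ℤ, ∑ i ∈ s, (w i : ℤ) * c i = 1 := by
  obtain ⟨c, hc⟩ := s.gcd_eq_sum_mul fun i ↦ (w i : ℤ)
  exact ⟨c, by rw [← hc, ← natCast_gcd, h, Nat.cast_one]⟩

section WeightedSum

variable {ι A : Type*} [Fintype ι] [AddCommGroup A]

def weightedSum (w : ι → ℕ) : (ι → A) →+ A where
  toFun x := ∑ i, w i • x i
  map_zero' := by simp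
  map_add' x y := by simp [smul_add, sum_add_distrib]

lemma weightedSum_apply (w : ι → ℕ) (x : ι → A) : weightedSum w x = ∑ i, w i • x i := rfl

lemma weightedSum_mul_left (e : ℕ) (w : ι → ℕ) (x : ι → A) :
    weightedSum (fun i ↦ e * w i) x = e • weightedSum w x := by
  simp only [weightedSum_apply, smul_sum, mul_smul]

lemma rightInverse_weightedSum {w : ι → ℕ} {c : ι → ℤ} (hc : ∑ i, (w i : ℤ) * c i = 1) :
    Function.RightInverse (fun (a : A) i ↦ c i • a) (weightedSum w) := fun a ↦ by
  simp only [weightedSum_apply, ← natCast_zsmul, smul_smul, ← sum_smul, hc, one_smul]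

lemma continuous_weightedSum [TopologicalSpace A] [ContinuousAdd A] (w : ι → ℕ) :
    Continuous (weightedSum (A := A) w) :=
  continuous_finsetSum _ fun i _ ↦ (continuous_apply i).nsmul (w i)

end WeightedSum

section PreimageComponents

variable {G H : Type*} [AddCommGroup G] [TopologicalSpace G] [IsTopologicalAddGroup G]
  [ConnectedSpace G] [AddCommGroup H] [TopologicalSpace H]
  {f : G →+ H} {σ : H → G} {S : Set H}

lemma connectedComponent_eq_of_rightInverse (hf : Continuous f) (hσ : Continuous σ)
    (hfσ : Function.RightInverse σ f) {x y : {x // f x ∈ S}} (hxy : f x = f y) :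
    connectedComponent x = connectedComponent y := by
  let shift : G → {x // f x ∈ S} := fun z ↦
    ⟨x + (z - σ (f z)), by simpa [hfσ (f z)] using x.2⟩
  have hshift : Continuous shift :=
    (continuous_const.add (continuous_id.sub (hσ.comp hf))).subtype_mk _
  have hx : shift (σ 0) = x := Subtype.ext (by simp [shift, hfσ 0])
  have hy : shift (y - x + σ 0) = y := Subtype.ext (by simp [shift, hfσ 0, hxy])
  refine connectedComponent_eq ((isPreconnected_range hshift).subset_connectedComponent ?_ ?_)
  · exact ⟨_, hx⟩
  · exact ⟨_, hy⟩

lemma card_connectedComponents_preimage [TotallyDisconnectedSpace S]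
    (hf : Continuous f) (hσ : Continuous σ) (hfσ : Function.RightInverse σ f) :
    Nat.card (ConnectedComponents {x // f x ∈ S}) = Nat.card S := by
  let restrict : {x // f x ∈ S} → S := fun x ↦ ⟨f x, x.2⟩
  have hrestrict : Continuous restrict := (hf.comp continuous_subtype_val).subtype_mk _
  refine Nat.card_eq_of_bijective hrestrict.connectedComponentsLift ⟨?_, fun a ↦ ?_⟩
  · rintro ⟨x⟩ ⟨y⟩ hxy
    simp only [restrict, Subtype.ext_iff] at hxy
    exact ConnectedComponents.coe_eq_coe.mpr
      (connectedComponent_eq_of_rightInverse hf hσ hfσ hxy)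
  · refine ⟨ConnectedComponents.mk ⟨σ a, by simp [hfσ a]⟩, ?_⟩
    exact Subtype.ext (hfσ a)

end PreimageComponents

theorem kernel_connectedComponents_card_general
    {A : Type*} [AddCommGroup A] [TopologicalSpace A] [IsTopologicalAddGroup A]
    [T2Space A] [ConnectedSpace A]
    (htors : ∀ m : ℕ, 0 < m → Nat.card {a : A // m • a = 0} = m ^ 4)
    (ℓ : ℕ) (hℓ : 0 < ℓ)
    (l : Fin ℓ → ℕ) (hpos : ∀ i, 0 < l i)
    (e : ℕ) (he : e = Finset.univ.gcd l) :
    Nat.card (ConnectedComponents {x : Fin ℓ → A // ∑ i, l i • x i = 0}) = e ^ 4 := by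
  have he0 : 0 < e := Nat.pos_of_ne_zero fun h ↦
    (hpos ⟨0, hℓ⟩).ne' (gcd_eq_zero_iff.mp (he ▸ h) _ (mem_univ _))
  obtain ⟨μ, hlμ, hμ⟩ := extract_gcd l (univ_nonempty_iff.mpr ⟨⟨0, hℓ⟩⟩)
  obtain ⟨c, hc⟩ := exists_sum_natCast_mul_eq_one hμ
  obtain rfl : l = fun i ↦ e * μ i := funext fun i ↦ he ▸ hlμ i (mem_univ i)
  have : Finite {a : A | e • a = 0} :=
    Nat.finite_of_card_ne_zero ((htors e he0).trans_ne (by positivity))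
  have hker : (fun x : Fin ℓ → A ↦ ∑ i, (e * μ i) • x i = 0) =
      fun x ↦ weightedSum μ x ∈ {a : A | e • a = 0} :=
    funext fun x ↦ by rw [← weightedSum_apply, weightedSum_mul_left]; rfl
  rw [hker]
  exact (card_connectedComponents_preimage (S := {a : A | e • a = 0})
    (continuous_weightedSum μ) (continuous_pi fun i ↦ continuous_id.zsmul (c i))
    (rightInverse_weightedSum hc)).trans (htors e he0)

/-- Let `A` be a complex abelian surface (modelled as a compact connected
Hausdorff topological abelian group whose `m`-torsion has exactly `m ^ 4` elements for all
`m > 0`), `n` a positive integer and `l = (λ₁, …, λ_ℓ)` a partition of `n` with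
`e = gcd (λ₁, …, λ_ℓ)`.  Let `s : A^ℓ → A` be the homomorphism `s x = ∑ i, λᵢ • xᵢ`.
Then the kernel `K^λ = ker s` has exactly `e ^ 4` connected components. -/
theorem kernel_connectedComponents_card
    {A : Type*} [AddCommGroup A] [TopologicalSpace A] [IsTopologicalAddGroup A]
    [T2Space A] [CompactSpace A] [ConnectedSpace A]
    (htors : ∀ m : ℕ, 0 < m → Nat.card {a : A // m • a = 0} = m ^ 4)
    (n ℓ : ℕ) (hn : 0 < n) (hℓ : 0 < ℓ)
    (l : Fin ℓ → ℕ) (hpos : ∀ i, 0 < l i) (hanti : Antitone l)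
    (hsum : ∑ i, l i = n)
    (e : ℕ) (he : e = Finset.univ.gcd l) :
    Nat.card (ConnectedComponents {x : Fin ℓ → A // ∑ i, l i • x i = 0}) = e ^ 4 :=
  kernel_connectedComponents_card_general htors ℓ hℓ l hpos e he
end

section
/- Let A be an abelian surface, λ a partition of n, τ ∈ A[e(λ)], and K_τ^{(λ)} the quotient of K_τ^λ = {x ∈ A^ℓ | Σᵢ (λᵢ/e(λ)) xᵢ = τ} by the group 𝔖_λ permuting equal parts. The map φ : A × K_τ^{(λ)} → A^{(λ)}, φ(x, z) = t_x z (translating every coordinate of z by x), is a well-defined surjective morphism, and it is the quotient map by the action of A[n/e(λ)] given by σ·(x, z) = (x − σ, t_σ z). -/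
/-- Let `A` be an abelian surface (its divisible group of points), `l` a
partition of `n`, `τ ∈ A[e(λ)]`, and `K_τ^{(λ)}` the quotient of
`K_τ^λ = {x ∈ A^ℓ | ∑ i, (λᵢ/e) • xᵢ = τ}` by the group `𝔖_λ` of permutations preserving the
parts (`rel` is the corresponding orbit equivalence on `A^ℓ`, so that `A^{(λ)} = A^ℓ/rel` and
`K_τ^{(λ)} = K_τ^λ/rel`).  The map `φ : A × K_τ^{(λ)} → A^{(λ)}`, `φ(x, z) = t_x z`
(translating every coordinate of `z` by `x`), is a well-defined surjective morphism, and it is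
the quotient map by the action of `A[n/e(λ)]` given by `σ • (x, z) = (x − σ, t_σ z)`:

* (well-definedness) translation by `x` is compatible with `rel`;
* (surjectivity) every point of `A^{(λ)}` is of the form `φ(x, z)`;
* (quotient identification) `φ(x, z) = φ(x', z')` iff `(x', z')` is in the
  `A[n/e(λ)]`-orbit of `(x, z)`. -/
theorem translation_map_is_quotient_by_torsion
    {A : Type*} [AddCommGroup A]
    (hdiv : ∀ m : ℕ, 0 < m → ∀ a : A, ∃ b : A, m • b = a)
    (n ℓ : ℕ) (hn : 0 < n) (hℓ : 0 < ℓ)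
    (l : Fin ℓ → ℕ) (hpos : ∀ i, 0 < l i) (hanti : Antitone l)
    (hsum : ∑ i, l i = n)
    (e : ℕ) (he : e = Finset.univ.gcd l)
    (τ : A) (hτ : e • τ = 0)
    (Kτ : Set (Fin ℓ → A)) (hK : Kτ = {x : Fin ℓ → A | ∑ i, (l i / e) • x i = τ})
    (rel : (Fin ℓ → A) → (Fin ℓ → A) → Prop)
    (hrel : ∀ w w', rel w w' ↔
      ∃ g : Equiv.Perm (Fin ℓ), (∀ i, l (g i) = l i) ∧ w' = w ∘ g) :
    (∀ (x : A) (z z' : Fin ℓ → A), z ∈ Kτ → z' ∈ Kτ → rel z z' →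
      rel (fun i => z i + x) (fun i => z' i + x)) ∧
    (∀ w : Fin ℓ → A, ∃ (x : A) (z : Fin ℓ → A), z ∈ Kτ ∧
      rel (fun i => z i + x) w) ∧
    (∀ (x x' : A) (z z' : Fin ℓ → A), z ∈ Kτ → z' ∈ Kτ →
      (rel (fun i => z i + x) (fun i => z' i + x') ↔
        ∃ σ : A, (n / e) • σ = 0 ∧ x' = x - σ ∧ rel (fun i => z i + σ) z')) := by

  have hed : ∀ i, e ∣ l i := fun i => he ▸ Finset.gcd_dvd (Finset.mem_univ i)
  have hepos : 0 < e := by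
    rcases Nat.eq_zero_or_pos e with h | h
    · have := hed ⟨0, hℓ⟩
      rw [h] at this
      exact absurd (zero_dvd_iff.mp this) (hpos _).ne'
    · exact h
  have hmul : e * (∑ i, l i / e) = n := by
    rw [Finset.mul_sum, ← hsum]
    exact Finset.sum_congr rfl fun i _ => Nat.mul_div_cancel' (hed i)
  have hsumdiv : ∑ i, l i / e = n / e := by
    rw [← hmul, Nat.mul_div_cancel_left _ hepos]
  have hnepos : 0 < n / e := by
    rw [← hsumdiv]
    have : 0 < l ⟨0, hℓ⟩ / e := Nat.div_pos (Nat.le_of_dvd (hpos _) (hed _)) hepos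
    exact this.trans_le (Finset.single_le_sum (f := fun i => l i / e) (fun i _ => Nat.zero_le _) (Finset.mem_univ _))
  -- key computation: shifting sums by a constant
  have hshift : ∀ (z : Fin ℓ → A) (c : A) (g : Equiv.Perm (Fin ℓ)), (∀ i, l (g i) = l i) →
      ∑ i, (l i / e) • (z (g i) + c) = (∑ i, (l i / e) • z i) + (n / e) • c := by
    intro z c g hg
    have h1 : ∑ i, (l i / e) • (z (g i) + c) = ∑ i, (l (g i) / e) • (z (g i) + c) :=
      Finset.sum_congr rfl fun i _ => by rw [hg]
    rw [h1, Equiv.sum_comp g (fun j => (l j / e) • (z j + c))]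
    simp only [smul_add, Finset.sum_add_distrib, ← Finset.sum_smul, hsumdiv]
  refine ⟨?_, ?_, ?_⟩
  · intro x z z' hz hz' hrelzz'
    rw [hrel] at hrelzz' ⊢
    obtain ⟨g, hg, hzz'⟩ := hrelzz'
    exact ⟨g, hg, by funext i; simp [hzz']⟩
  · intro w
    obtain ⟨x, hx⟩ := hdiv (n / e) hnepos ((∑ i, (l i / e) • w i) - τ)
    refine ⟨x, fun i => w i - x, ?_, ?_⟩
    · rw [hK]
      have := hshift w (-x) (Equiv.refl _) (fun i => rfl)
      simp only [Equiv.refl_apply] at this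
      simp only [Set.mem_setOf_eq, ← sub_eq_add_neg] at this ⊢
      rw [this, smul_neg, hx]
      abel
    · rw [hrel]
      exact ⟨Equiv.refl _, fun i => rfl, by funext i; simp⟩
  · intro x x' z z' hz hz'
    rw [hK, Set.mem_setOf_eq] at hz hz'
    constructor
    · intro h
      rw [hrel] at h
      obtain ⟨g, hg, heq⟩ := h
      set σ := x - x' with hσ
      have hz'eq : ∀ i, z' i = z (g i) + σ := by
        intro i
        have := congrFun heq i
        simp only [Function.comp_apply] at this
        have : z' i + x' = z (g i) + x := this
        rw [hσ]
        rw [eq_comm] at this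
        have := sub_eq_sub_iff_add_eq_add.mpr this.symm
        linear_combination (norm := abel) this
      refine ⟨σ, ?_, by rw [hσ]; abel, ?_⟩
      · have hsum' : ∑ i, (l i / e) • z' i = τ := hz'
        have : ∑ i, (l i / e) • (z (g i) + σ) = τ + (n / e) • σ := by
          rw [hshift z σ g hg, hz]
        rw [← Finset.sum_congr rfl (fun i _ => by rw [← hz'eq i]), hsum'] at this
        have := this.symm
        simpa using this
      · rw [hrel]
        exact ⟨g, hg, by funext i; simp [hz'eq i]⟩
    · rintro ⟨σ, hσ0, hx', hrelσ⟩
      rw [hrel] at hrelσ ⊢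
      obtain ⟨g, hg, heq⟩ := hrelσ
      refine ⟨g, hg, ?_⟩
      funext i
      have := congrFun heq i
      simp only [Function.comp_apply] at this ⊢
      rw [this, hx']
      abel
end
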